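/- arXiv:1409.5748 — 2 statements merged into one kernel-verified Lean document; each statement's English description precedes it below -/
import Mathlib

section
/- Let a : ℝ → ℝ be bounded on compact sets, let b > 0 and T ≥ 0. If ε^b · a(ε⁻¹) → 0 as ε → 0⁺, then sup_{t ∈ [0,T]} ε^b · |a(t·ε⁻¹)| → 0 as ε → 0⁺. -/
open Filter Set Topology

/-!
Write `ε ^ b * |a (t / ε)| = t ^ b * |δ ^ b * a δ⁻¹|` with `δ = ε / t`. Fix a threshold `δ₀` below
which the hypothesis makes `|δ ^ b * a δ⁻¹|` small. If `t / ε > δ₀⁻¹`, then `δ < δ₀` and the term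
is small uniformly in `t ≤ T`; otherwise `t / ε` lies in the compact interval `[0, δ₀⁻¹]`, where
`a` is bounded, and the factor `ε ^ b` tends to `0`.
-/

lemma rpow_mul_abs_apply_mul_inv_eq (a : ℝ → ℝ) {b ε t : ℝ} (hε : 0 < ε) (ht : 0 < t) :
    ε ^ b * |a (t * ε⁻¹)| = t ^ b * |(ε / t) ^ b * a (ε / t)⁻¹| := by
  rw [abs_mul, abs_of_nonneg (Real.rpow_nonneg (div_pos hε ht).le b),
    Real.div_rpow hε.le ht.le, inv_div, div_eq_mul_inv t ε]
  field_simp [(Real.rpow_pos_of_pos ht b).ne']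

lemma rpow_mul_abs_apply_mul_inv_le_max {a : ℝ → ℝ} {b T δ₀ C η ε t : ℝ} (hb : 0 ≤ b)
    (hδ₀ : 0 < δ₀) (hC : ∀ x ∈ Icc 0 δ₀⁻¹, |a x| ≤ C)
    (hsmall : ∀ δ ∈ Ioo 0 δ₀, |δ ^ b * a δ⁻¹| < η) (hε : 0 < ε) (ht : t ∈ Icc 0 T) :
    ε ^ b * |a (t * ε⁻¹)| ≤ max (ε ^ b * C) (T ^ b * η) := by
  obtain ⟨ht₀, htT⟩ := ht
  rcases le_or_gt (t * ε⁻¹) δ₀⁻¹ with hle | hgt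
  · exact le_max_of_le_left <|
      mul_le_mul_of_nonneg_left (hC _ ⟨by positivity, hle⟩) (Real.rpow_nonneg hε.le b)
  · have htpos : 0 < t :=
      pos_of_mul_pos_left ((inv_pos.2 hδ₀).trans hgt) (inv_pos.2 hε).le
    have hδ : ε / t ∈ Ioo 0 δ₀ :=
      ⟨div_pos hε htpos, by simpa [inv_div, div_eq_mul_inv] using inv_lt_of_inv_lt₀ hδ₀ hgt⟩
    refine le_max_of_le_right ?_
    rw [rpow_mul_abs_apply_mul_inv_eq a hε htpos]
    exact mul_le_mul (Real.rpow_le_rpow ht₀ htT hb) (hsmall _ hδ).le (abs_nonneg _)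
      (Real.rpow_nonneg (ht₀.trans htT) b)

lemma tendsto_rpow_mul_const_nhdsGT_zero {b : ℝ} (hb : 0 < b) (C : ℝ) :
    Tendsto (fun ε : ℝ => ε ^ b * C) (𝓝[>] 0) (𝓝 0) := by
  have := ((Real.continuousAt_rpow_const 0 b (Or.inr hb.le)).tendsto.mul_const C).mono_left
    (nhdsWithin_le_nhds (s := Ioi 0))
  simpa [Real.zero_rpow hb.ne'] using this

/-- If `a : ℝ → ℝ` is bounded on compact sets, `b > 0`, `T ≥ 0`, and
`ε^b * a(ε⁻¹) → 0` as `ε → 0⁺`, then `sup_{t ∈ [0,T]} ε^b * |a (t ε⁻¹)| → 0` as `ε → 0⁺`. -/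
theorem stmt0 (a : ℝ → ℝ) (b T : ℝ) (hb : 0 < b) (hT : 0 ≤ T)
    (hbdd : ∀ K : Set ℝ, IsCompact K → ∃ C : ℝ, ∀ x ∈ K, |a x| ≤ C)
    (h : Tendsto (fun ε : ℝ => ε ^ b * a ε⁻¹) (nhdsWithin 0 (Set.Ioi 0)) (nhds 0)) :
    Tendsto (fun ε : ℝ => ⨆ t : Set.Icc (0:ℝ) T, ε ^ b * |a ((t : ℝ) * ε⁻¹)|)
      (nhdsWithin 0 (Set.Ioi 0)) (nhds 0) := by
  have hTb : 0 ≤ T ^ b := Real.rpow_nonneg hT b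
  refine tendsto_order.2 ⟨fun η hη => ?_, fun η hη => ?_⟩
  · filter_upwards [self_mem_nhdsWithin] with ε hε
    exact hη.trans_le <|
      Real.iSup_nonneg fun _ => mul_nonneg (Real.rpow_nonneg hε.out.le b) (abs_nonneg _)
  set η' := η / (T ^ b + 1)
  have hη' : T ^ b * η' < η := by
    rw [mul_div_assoc', div_lt_iff₀ (by positivity)]
    linarith
  obtain ⟨δ₀, hδ₀, hsmall⟩ := mem_nhdsGT_iff_exists_Ioo_subset.1 <|
    h.abs.eventually_lt_const (by rw [abs_zero]; positivity : |(0 : ℝ)| < η')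
  obtain ⟨C, hC⟩ := hbdd (Icc 0 δ₀⁻¹) isCompact_Icc
  filter_upwards [self_mem_nhdsWithin,
    (tendsto_rpow_mul_const_nhdsGT_zero hb C).eventually_lt_const hη] with ε hε hεC
  calc (⨆ t : Icc (0:ℝ) T, ε ^ b * |a (t * ε⁻¹)|) ≤ max (ε ^ b * C) (T ^ b * η') :=
        Real.iSup_le (fun t => rpow_mul_abs_apply_mul_inv_le_max hb.le hδ₀ hC
          (fun δ hδ => hsmall hδ) hε t.2) (le_max_of_le_right (by positivity))
    _ < η := max_lt hεC hη'
end

section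
/- For θ > 0 not an integer, let C^θ(ℝ^d) be the space of bounded functions with bounded derivatives up to order ⌊θ⌋ whose ⌊θ⌋-th derivatives are (θ−⌊θ⌋)-Hölder, with the usual norm. Define on the algebraic tensor product C^θ(ℝ^d) ⊗_a C^θ(ℝ^d) the norm ‖u‖_{C^θ⊗C^θ} = ‖ι(u)‖_{C^{θ,θ}}, where ι(Σ_n u_n ⊗ v_n)(x,z) = Σ_n u_n(x) v_n(z) and ‖·‖_{C^{θ,θ}} is the mixed Hölder norm on functions of (x,z) ∈ ℝ^d × ℝ^d. Then this norm is admissible: ‖u ⊗ v‖ = ‖u‖_{C^θ} ‖v‖_{C^θ} for all u, v ∈ C^θ(ℝ^d), and ‖f ⊗ g‖_{L(C^θ ⊗_a C^θ, ℝ)} = ‖f‖_{L(C^θ,ℝ)} ‖g‖_{L(C^θ,ℝ)} for all bounded linear functionals f, g on C^θ(ℝ^d). -/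
/-!
The slices `z ↦ D_x^k (u(x) v(z)) = v(z) • D^k u(x)` factor, so every term of
`‖u ⊗ v‖_{C^{θ,θ}}` factors and the first identity is a computation.

For the functionals, `‖f ⊗ g‖ ≥ ‖f‖ ‖g‖` is seen on elementary tensors. Conversely
`(f ⊗ g)(Σ uₙ ⊗ vₙ) = f (Σ g(vₙ) uₙ)`, and `‖Σ g(vₙ) uₙ‖_{C^θ} ≤ ‖g‖ ‖ι(Σ uₙ ⊗ vₙ)‖_{C^{θ,θ}}`
term by term: `D^k (Σ g(vₙ) uₙ)(x) = Σ g(vₙ) • D^k uₙ(x)` is `g` applied to the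
multilinear-map-valued function `z ↦ D_x^k ι(Σ uₙ ⊗ vₙ)(x, z) = Σ vₙ(z) • D^k uₙ(x)`, and testing
against a norming functional (Hahn–Banach) bounds such a vector-valued application of `g` by
`‖g‖` times the `C^θ` norm.
-/

open Set

/-- The `C^θ` Hölder norm of a function between normed spaces. -/
noncomputable def cNorm {E F : Type*} [NormedAddCommGroup E] [NormedSpace ℝ E]
    [NormedAddCommGroup F] [NormedSpace ℝ F] (θ : ℝ) (u : E → F) : ℝ :=
  (∑ k ∈ Finset.range (⌊θ⌋₊ + 1), ⨆ x : E, ‖iteratedFDeriv ℝ k u x‖) +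
    ⨆ q : {q : E × E // q.1 ≠ q.2},
      ‖iteratedFDeriv ℝ ⌊θ⌋₊ u q.1.1 - iteratedFDeriv ℝ ⌊θ⌋₊ u q.1.2‖ /
        ‖q.1.1 - q.1.2‖ ^ (θ - (⌊θ⌋₊ : ℝ))

/-- Membership in `C^θ`: `⌊θ⌋`-times differentiable with bounded derivatives and
`(θ−⌊θ⌋)`-Hölder top derivatives. -/
def memC {E F : Type*} [NormedAddCommGroup E] [NormedSpace ℝ E]
    [NormedAddCommGroup F] [NormedSpace ℝ F] (θ : ℝ) (u : E → F) : Prop :=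
  ContDiff ℝ (⌊θ⌋₊ : ℕ) u ∧
  (∀ k : ℕ, k ≤ ⌊θ⌋₊ → BddAbove (range fun x : E => ‖iteratedFDeriv ℝ k u x‖)) ∧
  BddAbove (range fun q : {q : E × E // q.1 ≠ q.2} =>
    ‖iteratedFDeriv ℝ ⌊θ⌋₊ u q.1.1 - iteratedFDeriv ℝ ⌊θ⌋₊ u q.1.2‖ /
      ‖q.1.1 - q.1.2‖ ^ (θ - (⌊θ⌋₊ : ℝ)))

/-- The mixed Hölder norm `‖w‖_{C^{θ,θ}}` of `w : ℝ^d × ℝ^d → ℝ`: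
`Σ_{|k|≤⌊θ⌋} sup_x ‖D_x^k w(x,·)‖_{C^θ} + Σ_{|k|=⌊θ⌋} sup_{x≠x'} ‖D_x^k w(x,·) − D_x^k w(x',·)‖_{C^θ}/|x−x'|^{θ−⌊θ⌋}`. -/
noncomputable def cθθNorm {E : Type*} [NormedAddCommGroup E] [NormedSpace ℝ E]
    (θ : ℝ) (w : E × E → ℝ) : ℝ :=
  (∑ k ∈ Finset.range (⌊θ⌋₊ + 1),
      ⨆ x : E, cNorm θ (fun z : E => iteratedFDeriv ℝ k (fun x' => w (x', z)) x)) +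
    ⨆ q : {q : E × E // q.1 ≠ q.2},
      cNorm θ (fun z : E => iteratedFDeriv ℝ ⌊θ⌋₊ (fun x' => w (x', z)) q.1.1 -
          iteratedFDeriv ℝ ⌊θ⌋₊ (fun x' => w (x', z)) q.1.2) /
        ‖q.1.1 - q.1.2‖ ^ (θ - (⌊θ⌋₊ : ℝ))

open Finset

section CNorm

variable {E F G : Type*} [NormedAddCommGroup E] [NormedSpace ℝ E]
  [NormedAddCommGroup F] [NormedSpace ℝ F] [NormedAddCommGroup G] [NormedSpace ℝ G] {θ : ℝ}

noncomputable def iteratedSupNorm (k : ℕ) (u : E → F) : ℝ :=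
  ⨆ x, ‖iteratedFDeriv ℝ k u x‖

noncomputable def holderQuotient (θ : ℝ) (u : E → F) (x y : E) : ℝ :=
  ‖iteratedFDeriv ℝ ⌊θ⌋₊ u x - iteratedFDeriv ℝ ⌊θ⌋₊ u y‖ / ‖x - y‖ ^ (θ - ⌊θ⌋₊)

noncomputable def holderSeminorm (θ : ℝ) (u : E → F) : ℝ :=
  ⨆ q : {q : E × E // q.1 ≠ q.2}, holderQuotient θ u q.1.1 q.1.2

theorem cNorm_def (θ : ℝ) (u : E → F) :
    cNorm θ u = ∑ k ∈ range (⌊θ⌋₊ + 1), iteratedSupNorm k u + holderSeminorm θ u :=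
  rfl

lemma iteratedSupNorm_nonneg (k : ℕ) (u : E → F) : 0 ≤ iteratedSupNorm k u :=
  Real.iSup_nonneg fun _ => norm_nonneg _

lemma holderQuotient_nonneg (u : E → F) (x y : E) : 0 ≤ holderQuotient θ u x y :=
  div_nonneg (norm_nonneg _) (Real.rpow_nonneg (norm_nonneg _) _)

lemma holderSeminorm_nonneg (u : E → F) : 0 ≤ holderSeminorm θ u :=
  Real.iSup_nonneg fun _ => holderQuotient_nonneg u _ _

lemma cNorm_nonneg (u : E → F) : 0 ≤ cNorm θ u :=
  add_nonneg (sum_nonneg fun k _ => iteratedSupNorm_nonneg k u) (holderSeminorm_nonneg u)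

lemma iteratedSupNorm_le {k : ℕ} {u : E → F} {A : ℝ} (hA : 0 ≤ A)
    (h : ∀ x, ‖iteratedFDeriv ℝ k u x‖ ≤ A) : iteratedSupNorm k u ≤ A :=
  Real.iSup_le h hA

lemma holderSeminorm_le {u : E → F} {B : ℝ} (hB : 0 ≤ B)
    (h : ∀ x y, x ≠ y → holderQuotient θ u x y ≤ B) : holderSeminorm θ u ≤ B :=
  Real.iSup_le (fun q => h _ _ q.2) hB

lemma norm_iteratedFDeriv_le_iteratedSupNorm {u : E → F} (hu : memC θ u) {k : ℕ}
    (hk : k ≤ ⌊θ⌋₊) (x : E) : ‖iteratedFDeriv ℝ k u x‖ ≤ iteratedSupNorm k u :=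
  le_ciSup (hu.2.1 k hk) x

lemma holderQuotient_le_holderSeminorm {u : E → F} (hu : memC θ u) {x y : E} (hxy : x ≠ y) :
    holderQuotient θ u x y ≤ holderSeminorm θ u :=
  le_ciSup hu.2.2 ⟨(x, y), hxy⟩

lemma norm_iteratedFDeriv_le_cNorm {u : E → F} (hu : memC θ u) {k : ℕ} (hk : k ≤ ⌊θ⌋₊)
    (x : E) : ‖iteratedFDeriv ℝ k u x‖ ≤ cNorm θ u :=
  (norm_iteratedFDeriv_le_iteratedSupNorm hu hk x).trans <|
    le_add_of_le_of_nonneg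
      (single_le_sum (fun k _ => iteratedSupNorm_nonneg k u) (mem_range_succ_iff.2 hk))
      (holderSeminorm_nonneg u)

lemma holderQuotient_le_cNorm {u : E → F} (hu : memC θ u) {x y : E} (hxy : x ≠ y) :
    holderQuotient θ u x y ≤ cNorm θ u :=
  (holderQuotient_le_holderSeminorm hu hxy).trans <|
    le_add_of_nonneg_left (sum_nonneg fun k _ => iteratedSupNorm_nonneg k u)

lemma eq_zero_of_cNorm_eq_zero {u : E → F} (hu : memC θ u) (h : cNorm θ u = 0) : u = 0 := by
  funext x
  have hx := norm_iteratedFDeriv_le_cNorm hu (Nat.zero_le _) x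
  rw [norm_iteratedFDeriv_zero, h] at hx
  exact norm_le_zero_iff.1 hx

section Dominated

variable {ι : Type*} {s : Finset ι} {a : ι → ℝ} {u : ι → E → F} {w : E → G}

lemma holderQuotient_le_sum_of_dominated
    (hH : ∀ x y, ‖iteratedFDeriv ℝ ⌊θ⌋₊ w x - iteratedFDeriv ℝ ⌊θ⌋₊ w y‖ ≤
      ∑ i ∈ s, a i * ‖iteratedFDeriv ℝ ⌊θ⌋₊ (u i) x - iteratedFDeriv ℝ ⌊θ⌋₊ (u i) y‖)
    (x y : E) : holderQuotient θ w x y ≤ ∑ i ∈ s, a i * holderQuotient θ (u i) x y := by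
  simp_rw [holderQuotient, ← mul_div_assoc, ← sum_div]
  exact div_le_div_of_nonneg_right (hH x y) (Real.rpow_nonneg (norm_nonneg _) _)

lemma memC_of_dominated (ha : ∀ i ∈ s, 0 ≤ a i) (hu : ∀ i ∈ s, memC θ (u i))
    (hw : ContDiff ℝ ⌊θ⌋₊ w)
    (hD : ∀ k ≤ ⌊θ⌋₊, ∀ x,
      ‖iteratedFDeriv ℝ k w x‖ ≤ ∑ i ∈ s, a i * ‖iteratedFDeriv ℝ k (u i) x‖)
    (hH : ∀ x y, ‖iteratedFDeriv ℝ ⌊θ⌋₊ w x - iteratedFDeriv ℝ ⌊θ⌋₊ w y‖ ≤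
      ∑ i ∈ s, a i * ‖iteratedFDeriv ℝ ⌊θ⌋₊ (u i) x - iteratedFDeriv ℝ ⌊θ⌋₊ (u i) y‖) :
    memC θ w := by
  refine ⟨hw, fun k hk => ⟨∑ i ∈ s, a i * cNorm θ (u i), ?_⟩,
    ⟨∑ i ∈ s, a i * cNorm θ (u i), ?_⟩⟩
  · rintro _ ⟨x, rfl⟩
    exact (hD k hk x).trans <| sum_le_sum fun i hi =>
      mul_le_mul_of_nonneg_left (norm_iteratedFDeriv_le_cNorm (hu i hi) hk x) (ha i hi)
  · rintro _ ⟨q, rfl⟩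
    exact (holderQuotient_le_sum_of_dominated hH _ _).trans <| sum_le_sum fun i hi =>
      mul_le_mul_of_nonneg_left (holderQuotient_le_cNorm (hu i hi) q.2) (ha i hi)

lemma cNorm_le_of_dominated (ha : ∀ i ∈ s, 0 ≤ a i) (hu : ∀ i ∈ s, memC θ (u i))
    (hD : ∀ k ≤ ⌊θ⌋₊, ∀ x,
      ‖iteratedFDeriv ℝ k w x‖ ≤ ∑ i ∈ s, a i * ‖iteratedFDeriv ℝ k (u i) x‖)
    (hH : ∀ x y, ‖iteratedFDeriv ℝ ⌊θ⌋₊ w x - iteratedFDeriv ℝ ⌊θ⌋₊ w y‖ ≤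
      ∑ i ∈ s, a i * ‖iteratedFDeriv ℝ ⌊θ⌋₊ (u i) x - iteratedFDeriv ℝ ⌊θ⌋₊ (u i) y‖) :
    cNorm θ w ≤ ∑ i ∈ s, a i * cNorm θ (u i) := by
  have hsplit : ∑ i ∈ s, a i * cNorm θ (u i) =
      ∑ k ∈ range (⌊θ⌋₊ + 1), ∑ i ∈ s, a i * iteratedSupNorm k (u i) +
        ∑ i ∈ s, a i * holderSeminorm θ (u i) := by
    simp only [cNorm_def, mul_add, mul_sum, sum_add_distrib]
    rw [sum_comm]
  rw [cNorm_def θ w, hsplit]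
  refine add_le_add (sum_le_sum fun k hk => ?_) ?_
  · refine iteratedSupNorm_le
      (sum_nonneg fun i hi => mul_nonneg (ha i hi) (iteratedSupNorm_nonneg k _)) fun x => ?_
    exact (hD k (mem_range_succ_iff.1 hk) x).trans <| sum_le_sum fun i hi =>
      mul_le_mul_of_nonneg_left
        (norm_iteratedFDeriv_le_iteratedSupNorm (hu i hi) (mem_range_succ_iff.1 hk) x) (ha i hi)
  · refine holderSeminorm_le
      (sum_nonneg fun i hi => mul_nonneg (ha i hi) (holderSeminorm_nonneg _)) fun x y hxy => ?_
    exact (holderQuotient_le_sum_of_dominated hH x y).trans <| sum_le_sum fun i hi =>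
      mul_le_mul_of_nonneg_left (holderQuotient_le_holderSeminorm (hu i hi) hxy) (ha i hi)

end Dominated

lemma ContinuousLinearMap.compContinuousMultilinearMap_sub (L : F →L[ℝ] G) {k : ℕ}
    (m m' : ContinuousMultilinearMap ℝ (fun _ : Fin k => E) F) :
    L.compContinuousMultilinearMap m - L.compContinuousMultilinearMap m' =
      L.compContinuousMultilinearMap (m - m') := by
  ext; simp

lemma norm_iteratedFDeriv_comp_sub_le (L : F →L[ℝ] G) {u : E → F} {k : ℕ} (hu : ContDiff ℝ k u)
    (x y : E) :
    ‖iteratedFDeriv ℝ k (L ∘ u) x - iteratedFDeriv ℝ k (L ∘ u) y‖ ≤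
      ‖L‖ * ‖iteratedFDeriv ℝ k u x - iteratedFDeriv ℝ k u y‖ := by
  rw [L.iteratedFDeriv_comp_left hu.contDiffAt le_rfl,
    L.iteratedFDeriv_comp_left hu.contDiffAt le_rfl, L.compContinuousMultilinearMap_sub]
  exact L.norm_compContinuousMultilinearMap_le _

lemma memC_comp (L : F →L[ℝ] G) {u : E → F} (hu : memC θ u) : memC θ (L ∘ u) :=
  memC_of_dominated (s := univ) (a := fun _ : Unit => ‖L‖) (u := fun _ => u)
    (fun _ _ => norm_nonneg L) (fun _ _ => hu) (L.contDiff.comp hu.1)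
    (fun k hk x => by
      simpa using L.norm_iteratedFDeriv_comp_left (x := x) hu.1.contDiffAt (mod_cast hk))
    (by simpa using norm_iteratedFDeriv_comp_sub_le L hu.1)

lemma cNorm_comp_le (L : F →L[ℝ] G) {u : E → F} (hu : memC θ u) :
    cNorm θ (L ∘ u) ≤ ‖L‖ * cNorm θ u := by
  simpa using cNorm_le_of_dominated (s := univ) (a := fun _ : Unit => ‖L‖) (u := fun _ => u)
    (fun _ _ => norm_nonneg L) (fun _ _ => hu)
    (fun k hk x => by
      simpa using L.norm_iteratedFDeriv_comp_left (x := x) hu.1.contDiffAt (mod_cast hk))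
    (by simpa using norm_iteratedFDeriv_comp_sub_le L hu.1)

lemma memC_const_smul (c : ℝ) {u : E → F} (hu : memC θ u) : memC θ (c • u) :=
  memC_comp (c • ContinuousLinearMap.id ℝ F) hu

lemma cNorm_const_smul_le (c : ℝ) {u : E → F} (hu : memC θ u) :
    cNorm θ (c • u) ≤ |c| * cNorm θ u := by
  refine (cNorm_comp_le (c • ContinuousLinearMap.id ℝ F) hu).trans
    (mul_le_mul_of_nonneg_right ?_ (cNorm_nonneg u))
  calc ‖c • ContinuousLinearMap.id ℝ F‖ ≤ ‖c‖ * ‖ContinuousLinearMap.id ℝ F‖ :=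
        ContinuousLinearMap.opNorm_smul_le _ _
    _ ≤ |c| := mul_le_of_le_one_right (abs_nonneg c) ContinuousLinearMap.norm_id_le

lemma memC_smul_const {v : E → ℝ} (c : F) (hv : memC θ v) : memC θ (fun z => v z • c) :=
  memC_comp ((ContinuousLinearMap.id ℝ ℝ).smulRight c) hv

lemma iteratedFDeriv_smul_const_eq_smulRight {v : E → ℝ} (c : F) {k : ℕ} {x : E}
    (hv : ContDiffAt ℝ k v x) :
    iteratedFDeriv ℝ k (fun z => v z • c) x = (iteratedFDeriv ℝ k v x).smulRight c := by
  rw [iteratedFDeriv_smul_const_apply hv]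
  ext; simp

lemma cNorm_smul_const {v : E → ℝ} (c : F) (hv : ContDiff ℝ ⌊θ⌋₊ v) :
    cNorm θ (fun z => v z • c) = cNorm θ v * ‖c‖ := by
  have hD : ∀ k ≤ ⌊θ⌋₊, ∀ x, iteratedFDeriv ℝ k (fun z => v z • c) x =
      (iteratedFDeriv ℝ k v x).smulRight c := fun k hk x =>
    iteratedFDeriv_smul_const_eq_smulRight c (hv.contDiffAt.of_le (by exact_mod_cast hk))
  rw [cNorm_def, cNorm_def, add_mul, sum_mul]
  congr 1
  · refine sum_congr rfl fun k hk => ?_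
    simp only [iteratedSupNorm, hD k (mem_range_succ_iff.1 hk),
      ContinuousMultilinearMap.norm_smulRight, Real.iSup_mul_of_nonneg (norm_nonneg c)]
  · have hsub : ∀ m m' : ContinuousMultilinearMap ℝ (fun _ : Fin ⌊θ⌋₊ => E) ℝ,
        m.smulRight c - m'.smulRight c = (m - m').smulRight c := fun m m' => by
      ext; simp [sub_smul]
    simp only [holderSeminorm, holderQuotient, hD _ le_rfl, hsub,
      ContinuousMultilinearMap.norm_smulRight, mul_div_right_comm,
      Real.iSup_mul_of_nonneg (norm_nonneg c)]

section Sum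

variable {ι : Type*} {s : Finset ι} {u : ι → E → F}

lemma iteratedFDeriv_sum_of_memC (hu : ∀ i ∈ s, memC θ (u i)) {k : ℕ} (hk : k ≤ ⌊θ⌋₊)
    (x : E) : iteratedFDeriv ℝ k (fun x => ∑ i ∈ s, u i x) x =
      ∑ i ∈ s, iteratedFDeriv ℝ k (u i) x :=
  iteratedFDeriv_fun_sum_apply fun i hi => (hu i hi).1.contDiffAt.of_le (mod_cast hk)

lemma norm_iteratedFDeriv_sum_le (hu : ∀ i ∈ s, memC θ (u i)) {k : ℕ} (hk : k ≤ ⌊θ⌋₊)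
    (x : E) : ‖iteratedFDeriv ℝ k (fun x => ∑ i ∈ s, u i x) x‖ ≤
      ∑ i ∈ s, 1 * ‖iteratedFDeriv ℝ k (u i) x‖ := by
  simpa [iteratedFDeriv_sum_of_memC hu hk] using norm_sum_le _ _

lemma norm_iteratedFDeriv_sum_sub_le (hu : ∀ i ∈ s, memC θ (u i)) (x y : E) :
    ‖iteratedFDeriv ℝ ⌊θ⌋₊ (fun x => ∑ i ∈ s, u i x) x -
        iteratedFDeriv ℝ ⌊θ⌋₊ (fun x => ∑ i ∈ s, u i x) y‖ ≤
      ∑ i ∈ s, 1 * ‖iteratedFDeriv ℝ ⌊θ⌋₊ (u i) x - iteratedFDeriv ℝ ⌊θ⌋₊ (u i) y‖ := by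
  simpa [iteratedFDeriv_sum_of_memC hu le_rfl, ← sum_sub_distrib] using norm_sum_le _ _

lemma memC_sum (hu : ∀ i ∈ s, memC θ (u i)) : memC θ (fun x => ∑ i ∈ s, u i x) :=
  memC_of_dominated (fun _ _ => zero_le_one) hu (ContDiff.sum fun i hi => (hu i hi).1)
    (fun _ hk => norm_iteratedFDeriv_sum_le hu hk) (norm_iteratedFDeriv_sum_sub_le hu)

lemma cNorm_sum_le (hu : ∀ i ∈ s, memC θ (u i)) :
    cNorm θ (fun x => ∑ i ∈ s, u i x) ≤ ∑ i ∈ s, cNorm θ (u i) := by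
  simpa using cNorm_le_of_dominated (fun _ _ => zero_le_one) hu
    (fun _ hk => norm_iteratedFDeriv_sum_le hu hk) (norm_iteratedFDeriv_sum_sub_le hu)

end Sum

lemma iteratedFDeriv_sum_smul {ι : Type*} [Fintype ι] {u : ι → E → F} (a : ι → ℝ) {k : ℕ}
    {x : E} (hu : ∀ i, ContDiffAt ℝ k (u i) x) :
    iteratedFDeriv ℝ k (fun y => ∑ i, a i • u i y) x = ∑ i, a i • iteratedFDeriv ℝ k (u i) x := by
  rw [iteratedFDeriv_fun_sum_apply fun i _ => (hu i).const_smul (a i)]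
  exact sum_congr rfl fun i _ => iteratedFDeriv_const_smul_apply' (hu i)

lemma cNorm_sum_smul_const_le {ι : Type*} [Fintype ι] {v : ι → E → ℝ} (hv : ∀ i, memC θ (v i))
    (c : ι → F) : cNorm θ (fun z => ∑ i, v i z • c i) ≤ ∑ i, cNorm θ (v i) * ‖c i‖ :=
  (cNorm_sum_le fun i _ => memC_smul_const (c i) (hv i)).trans_eq <|
    sum_congr rfl fun i _ => cNorm_smul_const (c i) (hv i).1

lemma norm_sum_smul_le_of_bound {ι : Type*} [Fintype ι] (g : (E → ℝ) →ₗ[ℝ] ℝ) {N : ℝ}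
    (hN : 0 ≤ N) (hg : ∀ v, memC θ v → |g v| ≤ N * cNorm θ v) {v : ι → E → ℝ}
    (hv : ∀ i, memC θ (v i)) (c : ι → F) :
    ‖∑ i, g (v i) • c i‖ ≤ N * cNorm θ (fun z => ∑ i, v i z • c i) := by
  obtain ⟨φ, hφ1, hφ⟩ := exists_dual_vector'' ℝ (∑ i, g (v i) • c i)
  set Φ : E → F := fun z => ∑ i, v i z • c i
  have hΦ : memC θ Φ := memC_sum fun i _ => memC_smul_const (c i) (hv i)
  have hgφ : φ (∑ i, g (v i) • c i) = g (φ ∘ Φ) := by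
    have : φ ∘ Φ = ∑ i, φ (c i) • v i := by ext z; simp [Φ, mul_comm]
    simp [this, mul_comm]
  calc ‖∑ i, g (v i) • c i‖ = g (φ ∘ Φ) := by rw [← hgφ, hφ]; rfl
    _ ≤ N * cNorm θ (φ ∘ Φ) := (le_abs_self _).trans (hg _ (memC_comp φ hΦ))
    _ ≤ N * (‖φ‖ * cNorm θ Φ) := mul_le_mul_of_nonneg_left (cNorm_comp_le φ hΦ) hN
    _ ≤ N * cNorm θ Φ :=
      mul_le_mul_of_nonneg_left (mul_le_of_le_one_left (cNorm_nonneg Φ) hφ1) hN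

end CNorm

section Tensor

variable {E : Type*} [NormedAddCommGroup E] [NormedSpace ℝ E] {θ : ℝ}

noncomputable def iteratedFDerivFst (k : ℕ) (w : E × E → ℝ) (x : E) :
    E → ContinuousMultilinearMap ℝ (fun _ : Fin k => E) ℝ :=
  fun z => iteratedFDeriv ℝ k (fun x' => w (x', z)) x

theorem cθθNorm_def (θ : ℝ) (w : E × E → ℝ) : cθθNorm θ w =
    ∑ k ∈ range (⌊θ⌋₊ + 1), (⨆ x, cNorm θ (iteratedFDerivFst k w x)) +
      ⨆ q : {q : E × E // q.1 ≠ q.2},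
        cNorm θ (iteratedFDerivFst ⌊θ⌋₊ w q.1.1 - iteratedFDerivFst ⌊θ⌋₊ w q.1.2) /
          ‖q.1.1 - q.1.2‖ ^ (θ - ⌊θ⌋₊) :=
  rfl

lemma iteratedFDerivFst_mul {u v : E → ℝ} {k : ℕ} {x : E} (hu : ContDiffAt ℝ k u x) :
    iteratedFDerivFst k (fun p => u p.1 * v p.2) x = fun z => v z • iteratedFDeriv ℝ k u x := by
  funext z
  simp only [iteratedFDerivFst, mul_comm (u _), ← smul_eq_mul]
  exact iteratedFDeriv_const_smul_apply' hu

theorem cθθNorm_mul {u v : E → ℝ} (hu : ContDiff ℝ ⌊θ⌋₊ u) (hv : ContDiff ℝ ⌊θ⌋₊ v) :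
    cθθNorm θ (fun p => u p.1 * v p.2) = cNorm θ u * cNorm θ v := by
  have hfst : ∀ k ≤ ⌊θ⌋₊, ∀ x, iteratedFDerivFst k (fun p => u p.1 * v p.2) x =
      fun z => v z • iteratedFDeriv ℝ k u x := fun k hk x =>
    iteratedFDerivFst_mul (hu.contDiffAt.of_le (mod_cast hk))
  rw [cθθNorm_def, cNorm_def θ u, add_mul, sum_mul]
  congr 1
  · refine sum_congr rfl fun k hk => ?_
    simp only [hfst k (mem_range_succ_iff.1 hk), cNorm_smul_const _ hv, iteratedSupNorm,
      Real.iSup_mul_of_nonneg (cNorm_nonneg v), mul_comm]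
  · have hsub : ∀ x y, iteratedFDerivFst ⌊θ⌋₊ (fun p => u p.1 * v p.2) x -
        iteratedFDerivFst ⌊θ⌋₊ (fun p => u p.1 * v p.2) y =
          fun z => v z • (iteratedFDeriv ℝ ⌊θ⌋₊ u x - iteratedFDeriv ℝ ⌊θ⌋₊ u y) := by
      intro x y; ext1 z; simp [hfst _ le_rfl, smul_sub]
    simp only [hsub, cNorm_smul_const _ hv, holderSeminorm, holderQuotient,
      Real.iSup_mul_of_nonneg (cNorm_nonneg v), mul_comm, mul_div_assoc]

section SumMul

variable {ι : Type*} [Fintype ι] {us vs : ι → E → ℝ}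

lemma iteratedFDerivFst_sum_mul {k : ℕ} {x : E} (hus : ∀ i, ContDiffAt ℝ k (us i) x) :
    iteratedFDerivFst k (fun p => ∑ i, us i p.1 * vs i p.2) x =
      fun z => ∑ i, vs i z • iteratedFDeriv ℝ k (us i) x := by
  funext z
  simp only [iteratedFDerivFst, mul_comm (us _ _), ← smul_eq_mul]
  exact iteratedFDeriv_sum_smul _ hus

lemma iteratedFDerivFst_sum_mul_sub (hus : ∀ i, memC θ (us i)) (x y : E) :
    iteratedFDerivFst ⌊θ⌋₊ (fun p => ∑ i, us i p.1 * vs i p.2) x -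
        iteratedFDerivFst ⌊θ⌋₊ (fun p => ∑ i, us i p.1 * vs i p.2) y =
      fun z => ∑ i, vs i z •
        (iteratedFDeriv ℝ ⌊θ⌋₊ (us i) x - iteratedFDeriv ℝ ⌊θ⌋₊ (us i) y) := by
  ext1 z
  simp [iteratedFDerivFst_sum_mul fun i => (hus i).1.contDiffAt, smul_sub]

lemma cNorm_iteratedFDerivFst_sum_mul_le (hus : ∀ i, memC θ (us i)) (hvs : ∀ i, memC θ (vs i))
    {k : ℕ} (hk : k ≤ ⌊θ⌋₊) (x : E) :
    cNorm θ (iteratedFDerivFst k (fun p => ∑ i, us i p.1 * vs i p.2) x) ≤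
      ∑ i, cNorm θ (vs i) * cNorm θ (us i) := by
  rw [iteratedFDerivFst_sum_mul fun i => (hus i).1.contDiffAt.of_le (mod_cast hk)]
  exact (cNorm_sum_smul_const_le hvs _).trans <| sum_le_sum fun i _ =>
    mul_le_mul_of_nonneg_left (norm_iteratedFDeriv_le_cNorm (hus i) hk x) (cNorm_nonneg _)

lemma cNorm_iteratedFDerivFst_sum_mul_sub_div_le (hus : ∀ i, memC θ (us i))
    (hvs : ∀ i, memC θ (vs i)) {x y : E} (hxy : x ≠ y) :
    cNorm θ (iteratedFDerivFst ⌊θ⌋₊ (fun p => ∑ i, us i p.1 * vs i p.2) x -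
        iteratedFDerivFst ⌊θ⌋₊ (fun p => ∑ i, us i p.1 * vs i p.2) y) /
          ‖x - y‖ ^ (θ - ⌊θ⌋₊) ≤ ∑ i, cNorm θ (vs i) * cNorm θ (us i) := by
  rw [iteratedFDerivFst_sum_mul_sub hus]
  refine (div_le_div_of_nonneg_right (cNorm_sum_smul_const_le hvs _)
    (Real.rpow_nonneg (norm_nonneg _) _)).trans ?_
  simp_rw [sum_div, mul_div_assoc]
  exact sum_le_sum fun i _ =>
    mul_le_mul_of_nonneg_left (holderQuotient_le_cNorm (hus i) hxy) (cNorm_nonneg _)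

theorem cNorm_sum_smul_le_mul_cθθNorm (g : (E → ℝ) →ₗ[ℝ] ℝ) {N : ℝ} (hN : 0 ≤ N)
    (hg : ∀ v, memC θ v → |g v| ≤ N * cNorm θ v) (hus : ∀ i, memC θ (us i))
    (hvs : ∀ i, memC θ (vs i)) :
    cNorm θ (fun x => ∑ i, g (vs i) • us i x) ≤
      N * cθθNorm θ (fun p => ∑ i, us i p.1 * vs i p.2) := by
  set w : E × E → ℝ := fun p => ∑ i, us i p.1 * vs i p.2
  have hD : ∀ k ≤ ⌊θ⌋₊, ∀ x, iteratedFDeriv ℝ k (fun x => ∑ i, g (vs i) • us i x) x =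
      ∑ i, g (vs i) • iteratedFDeriv ℝ k (us i) x := fun k hk x =>
    iteratedFDeriv_sum_smul _ fun i => (hus i).1.contDiffAt.of_le (mod_cast hk)
  have hbdd : ∀ k ≤ ⌊θ⌋₊, BddAbove (range fun x => cNorm θ (iteratedFDerivFst k w x)) :=
    fun k hk => ⟨_, by rintro _ ⟨x, rfl⟩; exact cNorm_iteratedFDerivFst_sum_mul_le hus hvs hk x⟩
  have hbddH : BddAbove (range fun q : {q : E × E // q.1 ≠ q.2} =>
      cNorm θ (iteratedFDerivFst ⌊θ⌋₊ w q.1.1 - iteratedFDerivFst ⌊θ⌋₊ w q.1.2) /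
        ‖q.1.1 - q.1.2‖ ^ (θ - ⌊θ⌋₊)) :=
    ⟨_, by rintro _ ⟨q, rfl⟩; exact cNorm_iteratedFDerivFst_sum_mul_sub_div_le hus hvs q.2⟩
  rw [cNorm_def, cθθNorm_def, mul_add, mul_sum]
  refine add_le_add (sum_le_sum fun k hk => iteratedSupNorm_le ?_ fun x => ?_)
    (holderSeminorm_le ?_ fun x y hxy => ?_)
  · exact mul_nonneg hN (Real.iSup_nonneg fun _ => cNorm_nonneg _)
  · replace hk := mem_range_succ_iff.1 hk
    calc ‖iteratedFDeriv ℝ k (fun x => ∑ i, g (vs i) • us i x) x‖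
        ≤ N * cNorm θ (iteratedFDerivFst k w x) := by
          rw [hD k hk, iteratedFDerivFst_sum_mul fun i => (hus i).1.contDiffAt.of_le (mod_cast hk)]
          exact norm_sum_smul_le_of_bound g hN hg hvs _
      _ ≤ _ := mul_le_mul_of_nonneg_left (le_ciSup (hbdd k hk) x) hN
  · exact mul_nonneg hN (Real.iSup_nonneg fun _ => div_nonneg (cNorm_nonneg _)
      (Real.rpow_nonneg (norm_nonneg _) _))
  · calc holderQuotient θ (fun x => ∑ i, g (vs i) • us i x) x y
        ≤ N * (cNorm θ (iteratedFDerivFst ⌊θ⌋₊ w x - iteratedFDerivFst ⌊θ⌋₊ w y) /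
            ‖x - y‖ ^ (θ - ⌊θ⌋₊)) := by
          rw [holderQuotient, hD _ le_rfl, hD _ le_rfl, iteratedFDerivFst_sum_mul_sub hus,
            ← sum_sub_distrib, ← mul_div_assoc]
          simp_rw [← smul_sub]
          gcongr
          exact norm_sum_smul_le_of_bound g hN hg hvs _
      _ ≤ _ := mul_le_mul_of_nonneg_left (le_ciSup hbddH ⟨(x, y), hxy⟩) hN

end SumMul

end Tensor

lemma Real.sSup_mul_sSup_le {A B : Set ℝ} {c : ℝ} (hA : ∀ a ∈ A, 0 ≤ a) (hB : ∀ b ∈ B, 0 ≤ b)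
    (hc : 0 ≤ c) (h : ∀ a ∈ A, ∀ b ∈ B, a * b ≤ c) : sSup A * sSup B ≤ c := by
  rw [← smul_eq_mul, ← Real.sSup_smul_of_nonneg (Real.sSup_nonneg hA)]
  refine Real.sSup_le ?_ hc
  rintro _ ⟨b, hb, rfl⟩
  change sSup A * b ≤ c
  rw [mul_comm, ← smul_eq_mul, ← Real.sSup_smul_of_nonneg (hB b hb)]
  refine Real.sSup_le ?_ hc
  rintro _ ⟨a, ha, rfl⟩
  change b * a ≤ c
  rw [mul_comm]
  exact h a ha b hb

section Dual

variable {E : Type*} [NormedAddCommGroup E] [NormedSpace ℝ E] {θ : ℝ}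

-- For unbounded `f` the set is unbounded and `sSup` takes the junk value `0`.
noncomputable def dualCNorm (θ : ℝ) (f : (E → ℝ) →ₗ[ℝ] ℝ) : ℝ :=
  sSup {r : ℝ | ∃ u, memC θ u ∧ cNorm θ u ≤ 1 ∧ r = |f u|}

noncomputable def dualTensorNorm (θ : ℝ) (f g : (E → ℝ) →ₗ[ℝ] ℝ) : ℝ :=
  sSup {r : ℝ | ∃ (n : ℕ) (us vs : Fin n → (E → ℝ)),
    (∀ i, memC θ (us i)) ∧ (∀ i, memC θ (vs i)) ∧
    cθθNorm θ (fun p => ∑ i, us i p.1 * vs i p.2) ≤ 1 ∧ r = |∑ i, f (us i) * g (vs i)|}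

variable {f g : (E → ℝ) →ₗ[ℝ] ℝ} {Cf Cg : ℝ}

lemma dualCNorm_nonneg (θ : ℝ) (f : (E → ℝ) →ₗ[ℝ] ℝ) : 0 ≤ dualCNorm θ f :=
  Real.sSup_nonneg <| by rintro _ ⟨u, -, -, rfl⟩; exact abs_nonneg _

lemma abs_le_dualCNorm (hf : ∀ u, memC θ u → |f u| ≤ Cf * cNorm θ u) {u : E → ℝ}
    (hu : memC θ u) (hu1 : cNorm θ u ≤ 1) : |f u| ≤ dualCNorm θ f := by
  refine le_csSup ⟨max Cf 0, ?_⟩ ⟨u, hu, hu1, rfl⟩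
  rintro _ ⟨v, hv, hv1, rfl⟩
  calc |f v| ≤ Cf * cNorm θ v := hf v hv
    _ ≤ max Cf 0 * cNorm θ v := mul_le_mul_of_nonneg_right (le_max_left _ _) (cNorm_nonneg v)
    _ ≤ max Cf 0 := mul_le_of_le_one_right (le_max_right _ _) hv1

lemma abs_le_dualCNorm_mul (hf : ∀ u, memC θ u → |f u| ≤ Cf * cNorm θ u) {u : E → ℝ}
    (hu : memC θ u) : |f u| ≤ dualCNorm θ f * cNorm θ u := by
  rcases (cNorm_nonneg u).eq_or_lt with h0 | hpos
  · rw [← h0, mul_zero, eq_zero_of_cNorm_eq_zero hu h0.symm, map_zero, abs_zero]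
  · set c := cNorm θ u
    have hunit : |f (c⁻¹ • u)| ≤ dualCNorm θ f := by
      refine abs_le_dualCNorm hf (memC_const_smul _ hu) ((cNorm_const_smul_le _ hu).trans ?_)
      rw [abs_of_pos (inv_pos.2 hpos), inv_mul_cancel₀ hpos.ne']
    rw [map_smul, smul_eq_mul, abs_mul, abs_of_pos (inv_pos.2 hpos), inv_mul_le_iff₀ hpos,
      mul_comm] at hunit
    exact hunit

lemma abs_sum_mul_le {n : ℕ} (hf : ∀ u, memC θ u → |f u| ≤ Cf * cNorm θ u)
    (hg : ∀ u, memC θ u → |g u| ≤ Cg * cNorm θ u) {us vs : Fin n → E → ℝ}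
    (hus : ∀ i, memC θ (us i)) (hvs : ∀ i, memC θ (vs i)) :
    |∑ i, f (us i) * g (vs i)| ≤
      dualCNorm θ f * dualCNorm θ g * cθθNorm θ (fun p => ∑ i, us i p.1 * vs i p.2) := by
  have hsum : ∑ i, f (us i) * g (vs i) = f (fun x => ∑ i, g (vs i) • us i x) := by
    rw [show (fun x => ∑ i, g (vs i) • us i x) = ∑ i, g (vs i) • us i by ext; simp, map_sum]
    simp [mul_comm]
  rw [hsum, mul_assoc]
  refine (abs_le_dualCNorm_mul hf (memC_sum fun i _ => memC_const_smul _ (hus i))).trans ?_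
  exact mul_le_mul_of_nonneg_left (cNorm_sum_smul_le_mul_cθθNorm g (dualCNorm_nonneg θ g)
    (fun v hv => abs_le_dualCNorm_mul hg hv) hus hvs) (dualCNorm_nonneg θ f)

theorem dualTensorNorm_eq (hf : ∀ u, memC θ u → |f u| ≤ Cf * cNorm θ u)
    (hg : ∀ u, memC θ u → |g u| ≤ Cg * cNorm θ u) :
    dualTensorNorm θ f g = dualCNorm θ f * dualCNorm θ g := by
  have hnorm := mul_nonneg (dualCNorm_nonneg θ f) (dualCNorm_nonneg θ g)
  have hbound : ∀ {n : ℕ} {us vs : Fin n → E → ℝ}, (∀ i, memC θ (us i)) →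
      (∀ i, memC θ (vs i)) → cθθNorm θ (fun p => ∑ i, us i p.1 * vs i p.2) ≤ 1 →
      |∑ i, f (us i) * g (vs i)| ≤ dualCNorm θ f * dualCNorm θ g := fun hus hvs hw =>
    (abs_sum_mul_le hf hg hus hvs).trans (mul_le_of_le_one_right hnorm hw)
  refine le_antisymm (Real.sSup_le ?_ hnorm) (Real.sSup_mul_sSup_le ?_ ?_ ?_ ?_)
  · rintro _ ⟨n, us, vs, hus, hvs, hw, rfl⟩
    exact hbound hus hvs hw
  · rintro _ ⟨u, -, -, rfl⟩; exact abs_nonneg _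
  · rintro _ ⟨u, -, -, rfl⟩; exact abs_nonneg _
  · exact Real.sSup_nonneg <| by rintro _ ⟨n, us, vs, -, -, -, rfl⟩; exact abs_nonneg _
  rintro _ ⟨u, hu, hu1, rfl⟩ _ ⟨v, hv, hv1, rfl⟩
  refine le_csSup ⟨dualCNorm θ f * dualCNorm θ g, ?_⟩
    ⟨1, fun _ => u, fun _ => v, fun _ => hu, fun _ => hv, ?_, ?_⟩
  · rintro _ ⟨n, us, vs, hus, hvs, hw, rfl⟩
    exact hbound hus hvs hw
  · simpa [cθθNorm_mul hu.1 hv.1] using mul_le_one₀ hu1 (cNorm_nonneg v) hv1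
  · simp [abs_mul]

end Dual

theorem stmt6_general (d : ℕ) (θ : ℝ)
    (f g : ((EuclideanSpace ℝ (Fin d) → ℝ)) →ₗ[ℝ] ℝ)
    (Cf Cg : ℝ)
    (hf : ∀ u, memC θ u → |f u| ≤ Cf * cNorm θ u)
    (hg : ∀ u, memC θ u → |g u| ≤ Cg * cNorm θ u) :
    (∀ u v : EuclideanSpace ℝ (Fin d) → ℝ, memC θ u → memC θ v →
      cθθNorm θ (fun p => u p.1 * v p.2) = cNorm θ u * cNorm θ v) ∧
    sSup {r : ℝ | ∃ (n : ℕ) (us vs : Fin n → (EuclideanSpace ℝ (Fin d) → ℝ)),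
        (∀ i, memC θ (us i)) ∧ (∀ i, memC θ (vs i)) ∧
        cθθNorm θ (fun p => ∑ i, us i p.1 * vs i p.2) ≤ 1 ∧
        r = |∑ i, f (us i) * g (vs i)|} =
      sSup {r : ℝ | ∃ u, memC θ u ∧ cNorm θ u ≤ 1 ∧ r = |f u|} *
        sSup {r : ℝ | ∃ u, memC θ u ∧ cNorm θ u ≤ 1 ∧ r = |g u|} :=
  ⟨fun _ _ hu hv => cθθNorm_mul hu.1 hv.1, dualTensorNorm_eq hf hg⟩

/-- the tensor norm on `C^θ(ℝ^d) ⊗_a C^θ(ℝ^d)` induced via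
`ι(Σ uₙ ⊗ vₙ)(x,z) = Σ uₙ(x) vₙ(z)` from the mixed norm `‖·‖_{C^{θ,θ}}` is admissible:
`‖u ⊗ v‖ = ‖u‖_{C^θ} ‖v‖_{C^θ}`, and `‖f ⊗ g‖ = ‖f‖ ‖g‖` for bounded linear
functionals `f, g` on `C^θ(ℝ^d)`. -/
theorem stmt6 (d : ℕ) (θ : ℝ) (hθ : 0 < θ) (hθni : ¬ ∃ n : ℕ, θ = n)
    (f g : ((EuclideanSpace ℝ (Fin d) → ℝ)) →ₗ[ℝ] ℝ)
    (Cf Cg : ℝ)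
    (hf : ∀ u, memC θ u → |f u| ≤ Cf * cNorm θ u)
    (hg : ∀ u, memC θ u → |g u| ≤ Cg * cNorm θ u) :
    (∀ u v : EuclideanSpace ℝ (Fin d) → ℝ, memC θ u → memC θ v →
      cθθNorm θ (fun p => u p.1 * v p.2) = cNorm θ u * cNorm θ v) ∧
    sSup {r : ℝ | ∃ (n : ℕ) (us vs : Fin n → (EuclideanSpace ℝ (Fin d) → ℝ)),
        (∀ i, memC θ (us i)) ∧ (∀ i, memC θ (vs i)) ∧
        cθθNorm θ (fun p => ∑ i, us i p.1 * vs i p.2) ≤ 1 ∧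
        r = |∑ i, f (us i) * g (vs i)|} =
      sSup {r : ℝ | ∃ u, memC θ u ∧ cNorm θ u ≤ 1 ∧ r = |f u|} *
        sSup {r : ℝ | ∃ u, memC θ u ∧ cNorm θ u ≤ 1 ∧ r = |g u|} :=
  stmt6_general d θ f g Cf Cg hf hg
end
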